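/- Characterisation of non-determinacy via a two-coloured counterexample: if there exists a structure M over the doubled alphabet Σ_G ∪ Σ_R and vertices u, v such that M satisfies all constraints G(Q) → R(Q) and R(Q) → G(Q) for Q ∈ 𝒬, M ⊨ (G(Q₀))(u,v), and M ⊭ (R(Q₀))(u,v), then the set 𝒬 of regular path queries over Σ does not determine the regular path query Q₀. -/
import Mathlib


inductive LPath {A V : Type} (E : A → V → V → Prop) : V → List A → V → Prop
  | nil (v : V) : LPath E v [] v
  | cons {u v w : V} {a : A} {l : List A} :
      E a u v → LPath E v l w → LPath E u (a :: l) w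

def SatQ {A V : Type} (L : Set (List A)) (E : A → V → V → Prop) (u v : V) : Prop :=
  ∃ w ∈ L, LPath E u w v

/-- Green recolouring of a language (the doubled alphabet is `A ⊕ A`,
`Sum.inl` = green, `Sum.inr` = red). -/
def greenL {A : Type} (L : Set (List A)) : Set (List (A ⊕ A)) :=
  (List.map Sum.inl) '' L

/-- Red recolouring of a language. -/
def redL {A : Type} (L : Set (List A)) : Set (List (A ⊕ A)) :=
  (List.map Sum.inr) '' L

def qAns {A V : Type} (L : Set (List A)) (E : A → V → V → Prop) : Set (V × V) :=
  {p | SatQ L E p.1 p.2}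

/-- `𝒬` determines `Q₀` (regular path queries, given by languages). -/
def DeterminesL {A : Type} (Q0 : Set (List A)) (Qs : Set (Set (List A))) : Prop :=
  ∀ (V : Type) (E₁ E₂ : A → V → V → Prop),
    (∀ L ∈ Qs, qAns L E₁ = qAns L E₂) → qAns Q0 E₁ = qAns Q0 E₂

lemma lpath_map {A V : Type} (E : (A ⊕ A) → V → V → Prop) (f : A → A ⊕ A)
    {x y : V} {w : List A} :
    LPath (fun a => E (f a)) x w y ↔ LPath E x (w.map f) y := by
  constructor
  · intro h; induction h with
    | nil => exact LPath.nil _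
    | cons he _ ih => exact LPath.cons he ih
  · intro h
    induction w generalizing x with
    | nil => cases h; exact LPath.nil _
    | cons a l ih => cases h with
      | cons he ht => exact LPath.cons he (ih ht)

lemma satq_comp {A V : Type} (L : Set (List A)) (E : (A ⊕ A) → V → V → Prop)
    (f : A → A ⊕ A) (x y : V) :
    SatQ L (fun a => E (f a)) x y ↔ SatQ ((List.map f) '' L) E x y := by
  constructor
  · rintro ⟨w, hw, hp⟩; exact ⟨w.map f, ⟨w, hw, rfl⟩, (lpath_map E f).1 hp⟩
  · rintro ⟨_, ⟨w, hw, rfl⟩, hp⟩; exact ⟨w, hw, (lpath_map E f).2 hp⟩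

/-- a two-coloured counterexample (a structure over the doubled
alphabet satisfying all constraints G(Q) → R(Q) and R(Q) → G(Q) for Q ∈ 𝒬,
with a green Q₀-path but no red Q₀-path between some u, v) witnesses that
𝒬 does not determine Q₀. -/
theorem counterexample_implies_non_determinacy {A : Type}
    (Q0 : Set (List A)) (Qs : Set (Set (List A)))
    (V : Type) (E : (A ⊕ A) → V → V → Prop) (u v : V)
    (hcon : ∀ L ∈ Qs, ∀ x y : V, SatQ (greenL L) E x y ↔ SatQ (redL L) E x y)
    (hg : SatQ (greenL Q0) E u v) (hr : ¬ SatQ (redL Q0) E u v) :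
    ¬ DeterminesL Q0 Qs := by
  intro hdet
  have h := hdet V (fun a => E (Sum.inl a)) (fun a => E (Sum.inr a)) (by
    intro L hL
    ext ⟨x, y⟩
    simp only [qAns, Set.mem_setOf_eq, satq_comp]
    exact hcon L hL x y)
  apply hr
  unfold redL
  rw [← (satq_comp Q0 E Sum.inr u v : _)]
  have : (u, v) ∈ qAns Q0 (fun a => E (Sum.inl a)) := (satq_comp Q0 E Sum.inl u v).2 hg
  rw [h] at this
  exact this
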